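/- Let C be the curve in C^3 defined by the monomial ideal I_{\mathbf{\mu}} = I_{\mu^1} \cap I_{\mu^2} \cap I_{\mu^3} attached to a triple of partitions not all empty. Then C is the unique torus-fixed Cohen-Macaulay (pure one-dimensional) closed subscheme of C^3 whose three outgoing partitions (given by localizing at x1, x2, x3) are \mu^1, \mu^2, \mu^3: any monomial ideal J with the same localizations and with C[x]/J of pure dimension 1 equals I_{\mathbf{\mu}}. -/

import Mathlib

/-!
STATEMENT 4: The curve `C_{μ}` defined by `I_μ = I_{μ¹} ∩ I_{μ²} ∩ I_{μ³}` is the unique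
torus-fixed Cohen-Macaulay (pure one-dimensional) subscheme of ℂ³ with outgoing
partitions μ¹,μ²,μ³: any monomial ideal `J` with the same localizations at the `x_i`
and with `ℂ[x]/J` of pure dimension 1 (all associated primes of dimension 1)
equals `I_μ`.
-/

noncomputable section

open MvPolynomial

abbrev R3 := MvPolynomial (Fin 3) ℂ

/-- `J` is a monomial ideal: it is generated by monomials. -/
def IsMonomialIdeal (J : Ideal R3) : Prop :=
  ∃ S : Set (Fin 3 →₀ ℕ), J = Ideal.span ((fun d => monomial d (1 : ℂ)) '' S)

/-- The cylinder monomial ideal `I_{μ^i} = μ[x_{i+1}, x_{i+2}] · ℂ[x₁,x₂,x₃]`. -/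
def cylinderIdeal (i : Fin 3) (μ : YoungDiagram) : Ideal R3 :=
  Ideal.span {m : R3 | ∃ a b : ℕ, (a, b) ∉ μ ∧
    m = monomial (Finsupp.single (i + 1) a + Finsupp.single (i + 2) b) (1 : ℂ)}

/-!
A cylinder ideal `I_{μ^i}` is generated by monomials not involving `x_i`, so it is
`x_i`-saturated and hence contains `J`. Conversely, if `f ∈ I_μ` then `x_i^n f ∈ J` for some `n`,
for every `i`. If `f ∉ J`, an associated prime of `ℂ[x]/J` containing the annihilator of `f`
contains all `x_i`, so it is the maximal ideal at the origin: an embedded point of dimension 0,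
which purity excludes.
-/

theorem Localization.Away.exists_pow_mul_mem_of_algebraMap_mem_map {R : Type*} [CommRing R]
    {x : R} {I : Ideal R} {f : R}
    (h : algebraMap R (Localization.Away x) f ∈ I.map (algebraMap R (Localization.Away x))) :
    ∃ n : ℕ, x ^ n * f ∈ I := by
  obtain ⟨_, ⟨n, rfl⟩, hn⟩ :=
    (IsLocalization.algebraMap_mem_map_algebraMap_iff (Submonoid.powers x) _ I f).mp h
  exact ⟨n, hn⟩

theorem exists_isAssociatedPrime_superset_of_pow_smul_eq_zero {R M : Type*} [CommRing R]
    [IsNoetherianRing R] [AddCommGroup M] [Module R M] {m : M} (hm : m ≠ 0) {s : Set R}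
    (hs : ∀ r ∈ s, ∃ n : ℕ, r ^ n • m = 0) :
    ∃ P : Ideal R, IsAssociatedPrime P M ∧ s ⊆ P := by
  obtain ⟨P, hP, hann⟩ := exists_le_isAssociatedPrime_of_isNoetherianRing R m hm
  refine ⟨P, hP, fun r hr => ?_⟩
  obtain ⟨n, hn⟩ := hs r hr
  exact hP.isPrime.mem_of_pow_mem n
    (hann (Submodule.mem_colon_singleton.mpr ((Submodule.mem_bot R).mpr hn)))

namespace MvPolynomial

variable {σ R : Type*}

theorem mem_span_monomial_of_X_pow_mul_mem [CommSemiring R] {s : Set (σ →₀ ℕ)} {i : σ}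
    (hs : ∀ d ∈ s, d i = 0) {f : MvPolynomial σ R} {n : ℕ}
    (h : X i ^ n * f ∈ Ideal.span ((fun d => monomial d (1 : R)) '' s)) :
    f ∈ Ideal.span ((fun d => monomial d (1 : R)) '' s) := by
  classical
  rw [mem_ideal_span_monomial_image] at h ⊢
  intro d hd
  have hshift : Finsupp.single i n + d ∈ (X i ^ n * f).support := by
    rwa [mem_support_iff, X_pow_eq_monomial, coeff_monomial_mul, one_mul, ← mem_support_iff]
  obtain ⟨e, he, hle⟩ := h _ hshift
  refine ⟨e, he, fun j => ?_⟩
  rcases eq_or_ne j i with rfl | hj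
  · simp [hs e he]
  · simpa [Finsupp.single_apply, Ne.symm hj] using hle j

theorem ker_constantCoeff_le_span_range_X [CommSemiring R] :
    RingHom.ker (constantCoeff : MvPolynomial σ R →+* R) ≤ Ideal.span (Set.range X) := by
  intro f hf
  rw [← Set.image_univ, mem_ideal_span_X_image]
  intro d hd
  obtain ⟨i, hi⟩ : ∃ i, d i ≠ 0 := by
    by_contra! h
    obtain rfl : d = 0 := Finsupp.ext h
    exact mem_support_iff.mp hd (by rwa [← constantCoeff_eq])
  exact ⟨i, trivial, hi⟩

theorem isMaximal_of_X_mem [Field R] {P : Ideal (MvPolynomial σ R)} (hP : P ≠ ⊤)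
    (hX : ∀ i, X i ∈ P) : P.IsMaximal := by
  have hker : (RingHom.ker (constantCoeff : MvPolynomial σ R →+* R)).IsMaximal :=
    RingHom.ker_isMaximal_of_surjective _ fun a => ⟨C a, constantCoeff_C σ a⟩
  have hle : RingHom.ker constantCoeff ≤ P :=
    ker_constantCoeff_le_span_range_X.trans (Ideal.span_le.mpr (Set.range_subset_iff.mpr hX))
  exact hker.eq_of_le hP hle ▸ hker

theorem mem_of_forall_X_pow_mul_mem {K : Type*} [Finite σ] [Field K]
    {J : Ideal (MvPolynomial σ K)}
    (hJ : ∀ P ∈ associatedPrimes (MvPolynomial σ K) (MvPolynomial σ K ⧸ J), ¬ P.IsMaximal)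
    {f : MvPolynomial σ K} (hf : ∀ i, ∃ n : ℕ, X i ^ n * f ∈ J) : f ∈ J := by
  by_contra hfJ
  have hkill : ∀ r ∈ Set.range (X : σ → MvPolynomial σ K),
      ∃ n : ℕ, r ^ n • Ideal.Quotient.mk J f = 0 := by
    rintro _ ⟨i, rfl⟩
    obtain ⟨n, hn⟩ := hf i
    exact ⟨n, Ideal.Quotient.eq_zero_iff_mem.mpr hn⟩
  obtain ⟨P, hP, hX⟩ := exists_isAssociatedPrime_superset_of_pow_smul_eq_zero
    (mt Ideal.Quotient.eq_zero_iff_mem.mp hfJ) hkill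
  exact hJ P hP (isMaximal_of_X_mem hP.isPrime.ne_top fun i => hX ⟨i, rfl⟩)

end MvPolynomial

theorem cylinderIdeal_eq_span_monomial (i : Fin 3) (μ : YoungDiagram) :
    cylinderIdeal i μ = Ideal.span ((fun d => monomial d (1 : ℂ)) ''
      {d | ∃ a b : ℕ, (a, b) ∉ μ ∧ d = Finsupp.single (i + 1) a + Finsupp.single (i + 2) b}) := by
  rw [cylinderIdeal]
  congr 1
  ext m
  constructor
  · rintro ⟨a, b, hab, rfl⟩
    exact ⟨_, ⟨a, b, hab, rfl⟩, rfl⟩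
  · rintro ⟨d, ⟨a, b, hab, rfl⟩, rfl⟩
    exact ⟨a, b, hab, rfl⟩

theorem cylinderIdeal_mem_of_X_pow_mul_mem {i : Fin 3} {μ : YoungDiagram} {f : R3} {n : ℕ}
    (h : X i ^ n * f ∈ cylinderIdeal i μ) : f ∈ cylinderIdeal i μ := by
  rw [cylinderIdeal_eq_span_monomial] at h ⊢
  refine MvPolynomial.mem_span_monomial_of_X_pow_mul_mem ?_ h
  rintro _ ⟨a, b, -, rfl⟩
  fin_cases i <;> simp

theorem unique_CM_curve_with_outgoing_partitions_general
    (μ : Fin 3 → YoungDiagram)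
    (J : Ideal R3)
    (hpure : ∀ p ∈ associatedPrimes R3 (R3 ⧸ J), ringKrullDim (R3 ⧸ p) = 1)
    (hloc : ∀ i : Fin 3,
      Ideal.map (algebraMap R3 (Localization.Away (X i : R3))) J =
        Ideal.map (algebraMap R3 (Localization.Away (X i : R3)))
          (cylinderIdeal i (μ i))) :
    J = ⨅ i, cylinderIdeal i (μ i) := by
  refine le_antisymm (le_iInf fun i f hf => ?_) fun f hf => ?_
  · obtain ⟨n, hn⟩ := Localization.Away.exists_pow_mul_mem_of_algebraMap_mem_map
      (hloc i ▸ Ideal.mem_map_of_mem _ hf)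
    exact cylinderIdeal_mem_of_X_pow_mul_mem hn
  · refine MvPolynomial.mem_of_forall_X_pow_mul_mem (fun P hP hmax => ?_) fun i =>
      Localization.Away.exists_pow_mul_mem_of_algebraMap_mem_map
        ((hloc i).symm ▸ Ideal.mem_map_of_mem _ (Ideal.mem_iInf.mp hf i))
    have hdim := hpure P hP
    rw [ringKrullDim_eq_zero_of_isField
      ((Ideal.Quotient.maximal_ideal_iff_isField_quotient P).mp hmax)] at hdim
    exact zero_ne_one hdim

theorem unique_CM_curve_with_outgoing_partitions
    (μ : Fin 3 → YoungDiagram) (hne : ¬ ∀ i, μ i = ⊥)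
    (J : Ideal R3) (hmono : IsMonomialIdeal J)
    (hpure : ∀ p ∈ associatedPrimes R3 (R3 ⧸ J), ringKrullDim (R3 ⧸ p) = 1)
    (hloc : ∀ i : Fin 3,
      Ideal.map (algebraMap R3 (Localization.Away (X i : R3))) J =
        Ideal.map (algebraMap R3 (Localization.Away (X i : R3)))
          (cylinderIdeal i (μ i))) :
    J = ⨅ i, cylinderIdeal i (μ i) :=
  unique_CM_curve_with_outgoing_partitions_general μ J hpure hloc

end
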